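/- For real symmetric positive definite d×d matrices A and B, the misalignment M(A, B) equals 0 if and only if B is aligned with A. -/

import Mathlib

open Matrix

/-- Eigenspace of a `d × d` real matrix `A` for the (potential) eigenvalue `μ`. -/
noncomputable def eigSp {d : ℕ} (A : Matrix (Fin d) (Fin d) ℝ) (μ : ℝ) :
    Submodule ℝ (Fin d → ℝ) :=
  Module.End.eigenspace A.mulVecLin μ

/-- `A` is aligned with `B` if every eigenspace of `B` is contained in an eigenspace of `A`. -/
def IsAligned {d : ℕ} (A B : Matrix (Fin d) (Fin d) ℝ) : Prop :=
  ∀ μ : ℝ, ∃ ν : ℝ, eigSp B μ ≤ eigSp A ν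

/-- The misalignment `M(A, B)`: the infimum, over symmetric positive definite matrices `S`
aligned with `A`, of `(1/2) · tr(S⁻¹ B + B⁻¹ S) − d`. -/
noncomputable def misalignment {d : ℕ} (A B : Matrix (Fin d) (Fin d) ℝ) : ℝ :=
  sInf {m : ℝ | ∃ S : Matrix (Fin d) (Fin d) ℝ,
    S.PosDef ∧ IsAligned S A ∧ m = (1 / 2) * (S⁻¹ * B + B⁻¹ * S).trace - d}

/-! The objective `J(S) = ½ tr(S⁻¹B + B⁻¹S) − d` equals `½ tr(S⁻¹ (B − S) B⁻¹ (B − S)) ≥ 0` and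
vanishes at `S = B`, so `M(A, B) = 0` as soon as `B` itself is admissible. Conversely, the bound
`tr Q ≤ tr P · tr(P⁻¹ Q)` for `P` positive definite and `Q` positive semidefinite, applied twice,
gives `‖B − S‖²_F ≤ 4 (tr B)² (J(S) + d) J(S)`, so a minimising sequence of admissible `S`
converges to `B`. The matrices acting as a scalar on a fixed eigenspace of `A` form a linear
subspace, which is closed, so the limit `B` acts as a scalar on every eigenspace of `A`. -/

open Filter Topology
open scoped MatrixOrder

namespace Matrix

section Trace
variable {n : Type*} [Fintype n]

theorem sq_apply_le_trace_transpose_mul_self {R : Type*} [CommRing R] [LinearOrder R]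
    [IsStrictOrderedRing R] (D : Matrix n n R) (i j : n) :
    D i j ^ 2 ≤ (Dᵀ * D).trace := by
  simp only [trace, diag, mul_apply, transpose_apply]
  calc D i j ^ 2 = D i j * D i j := sq _
    _ ≤ ∑ k, D k j * D k j :=
      Finset.single_le_sum (f := fun k => D k j * D k j) (fun k _ => mul_self_nonneg _)
        (Finset.mem_univ i)
    _ ≤ ∑ l, ∑ k, D k l * D k l :=
      Finset.single_le_sum (f := fun l => ∑ k, D k l * D k l)
        (fun l _ => Finset.sum_nonneg fun k _ => mul_self_nonneg _) (Finset.mem_univ j)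

variable [DecidableEq n] {P Q : Matrix n n ℝ}

theorem PosSemidef.trace_mul_nonneg (hP : P.PosSemidef) (hQ : Q.PosSemidef) :
    0 ≤ (P * Q).trace := by
  set R := CFC.sqrt Q
  have hR : Rᴴ = R := (CFC.sqrt_nonneg Q).posSemidef.isHermitian
  have hRR : R * R = Q := CFC.sqrt_mul_sqrt_self Q hQ.nonneg
  calc 0 ≤ (Rᴴ * P * R).trace := (hP.conjTranspose_mul_mul_same R).trace_nonneg
    _ = (P * Q).trace := by rw [hR, ← hRR, Matrix.mul_assoc, trace_mul_comm, Matrix.mul_assoc]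

theorem PosDef.one_le_trace_smul_inv (hP : P.PosDef) : 1 ≤ P.trace • P⁻¹ := by
  have hinv : P⁻¹ = cfc (·⁻¹ : ℝ → ℝ) P := by
    have := cfc_inv_id (R := ℝ) hP.isUnit.unit hP.isHermitian.isSelfAdjoint
    rwa [coe_units_inv, IsUnit.unit_spec, eq_comm] at this
  have hspec := hP.isHermitian.spectrum_real_eq_range_eigenvalues
  have htr : P.trace = ∑ i, hP.isHermitian.eigenvalues i := by
    simpa using hP.isHermitian.trace_eq_sum_eigenvalues
  have hcont : ContinuousOn (·⁻¹ : ℝ → ℝ) (spectrum ℝ P) := by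
    refine continuousOn_inv₀.mono fun x hx => ?_
    rw [hspec] at hx
    obtain ⟨i, rfl⟩ := hx
    exact (hP.eigenvalues_pos i).ne'
  rw [hinv, ← cfc_const_mul _ _ _ hcont]
  refine one_le_cfc _ _ (fun x hx => ?_) (continuousOn_const.mul hcont)
    hP.isHermitian.isSelfAdjoint
  rw [hspec] at hx
  obtain ⟨i, rfl⟩ := hx
  have hpos := hP.eigenvalues_pos i
  rw [← div_eq_mul_inv, one_le_div hpos, htr]
  exact Finset.single_le_sum (fun j _ => (hP.eigenvalues_pos j).le) (Finset.mem_univ i)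

theorem PosDef.trace_le_trace_mul_trace_inv_mul (hP : P.PosDef) (hQ : Q.PosSemidef) :
    Q.trace ≤ P.trace * (P⁻¹ * Q).trace := by
  have := (le_iff.mp hP.one_le_trace_smul_inv).trace_mul_nonneg hQ
  rwa [Matrix.sub_mul, Matrix.smul_mul, Matrix.one_mul, trace_sub, trace_smul, smul_eq_mul,
    sub_nonneg] at this

end Trace

variable {n R : Type*} [Fintype n] [CommRing R]

def scalarOn (E : Submodule R (n → R)) : Submodule R (Matrix n n R) where
  carrier := {S | ∃ ν, E ≤ Module.End.eigenspace S.mulVecLin ν}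
  add_mem' := by
    rintro S T ⟨ν, hS⟩ ⟨ν', hT⟩
    refine ⟨ν + ν', fun x hx => ?_⟩
    have hSx := Module.End.mem_eigenspace_iff.mp (hS hx)
    have hTx := Module.End.mem_eigenspace_iff.mp (hT hx)
    rw [mulVecLin_apply] at hSx hTx
    rw [Module.End.mem_eigenspace_iff, mulVecLin_apply, add_mulVec, hSx, hTx, add_smul]
  zero_mem' := ⟨0, fun x _ => by simp⟩
  smul_mem' := by
    rintro c S ⟨ν, hS⟩
    refine ⟨c * ν, fun x hx => ?_⟩
    have hSx := Module.End.mem_eigenspace_iff.mp (hS hx)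
    rw [mulVecLin_apply] at hSx
    rw [Module.End.mem_eigenspace_iff, mulVecLin_apply, smul_mulVec, hSx, smul_smul]

end Matrix

section Jeffreys
variable {n : Type*} [Fintype n] [DecidableEq n] {S B : Matrix n n ℝ}

/-- The Jeffreys (symmetrised Kullback–Leibler) divergence between `𝒩(0, S)` and `𝒩(0, B)`. -/
noncomputable def jeffreysDiv (S B : Matrix n n ℝ) : ℝ :=
  (1 / 2) * (S⁻¹ * B + B⁻¹ * S).trace - Fintype.card n

theorem jeffreysDiv_self (hB : B.PosDef) : jeffreysDiv B B = 0 := by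
  rw [jeffreysDiv, Matrix.nonsing_inv_mul B hB.det_pos.ne'.isUnit, trace_add, trace_one]
  ring

theorem inv_mul_sub_mul_inv_mul_sub (hS : S.PosDef) (hB : B.PosDef) :
    S⁻¹ * ((B - S) * B⁻¹ * (B - S)) = S⁻¹ * B + B⁻¹ * S - 2 • 1 := by
  have hBB : B * B⁻¹ = 1 := Matrix.mul_nonsing_inv B hB.det_pos.ne'.isUnit
  have hBB' : B⁻¹ * B = 1 := Matrix.nonsing_inv_mul B hB.det_pos.ne'.isUnit
  have hSS : S⁻¹ * S = 1 := Matrix.nonsing_inv_mul S hS.det_pos.ne'.isUnit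
  calc S⁻¹ * ((B - S) * B⁻¹ * (B - S))
      = S⁻¹ * B * (B⁻¹ * B) - S⁻¹ * (B * B⁻¹) * S - S⁻¹ * S * (B⁻¹ * B)
        + S⁻¹ * S * (B⁻¹ * S) := by noncomm_ring
    _ = S⁻¹ * B + B⁻¹ * S - 2 • 1 := by
      simp only [hBB, hBB', Matrix.mul_one, hSS, Matrix.one_mul]
      abel

theorem jeffreysDiv_eq_half_trace (hS : S.PosDef) (hB : B.PosDef) :
    jeffreysDiv S B = (1 / 2) * (S⁻¹ * ((B - S) * B⁻¹ * (B - S))).trace := by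
  rw [inv_mul_sub_mul_inv_mul_sub hS hB, trace_sub, trace_smul, trace_one, jeffreysDiv,
    nsmul_eq_mul]
  ring

theorem posSemidef_sub_mul_inv_mul_sub (hS : S.PosDef) (hB : B.PosDef) :
    ((B - S) * B⁻¹ * (B - S)).PosSemidef := by
  have hD : (B - S)ᴴ = B - S := (hB.isHermitian.sub hS.isHermitian).eq
  have := hB.inv.posSemidef.conjTranspose_mul_mul_same (B - S)
  rwa [hD] at this

theorem jeffreysDiv_nonneg (hS : S.PosDef) (hB : B.PosDef) : 0 ≤ jeffreysDiv S B := by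
  rw [jeffreysDiv_eq_half_trace hS hB]
  have := hS.inv.posSemidef.trace_mul_nonneg (posSemidef_sub_mul_inv_mul_sub hS hB)
  positivity

theorem trace_le_jeffreysDiv (hS : S.PosDef) (hB : B.PosDef) :
    S.trace ≤ 2 * B.trace * (jeffreysDiv S B + Fintype.card n) := by
  have h₁ := hB.trace_le_trace_mul_trace_inv_mul hS.posSemidef
  have h₂ := hS.inv.posSemidef.trace_mul_nonneg hB.posSemidef
  have h₃ := hB.posSemidef.trace_nonneg
  rw [jeffreysDiv, trace_add]
  nlinarith

theorem trace_sub_mul_sub_le_jeffreysDiv (hS : S.PosDef) (hB : B.PosDef) :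
    ((B - S) * (B - S)).trace ≤ 2 * B.trace * S.trace * jeffreysDiv S B := by
  have hD : (B - S)ᴴ = B - S := (hB.isHermitian.sub hS.isHermitian).eq
  have hDD : ((B - S) * (B - S)).PosSemidef := by
    have := posSemidef_conjTranspose_mul_self (B - S)
    rwa [hD] at this
  have hQ := posSemidef_sub_mul_inv_mul_sub hS hB
  have h₁ := hB.trace_le_trace_mul_trace_inv_mul hDD
  have h₂ := hS.trace_le_trace_mul_trace_inv_mul hQ
  have hcyc : (B⁻¹ * ((B - S) * (B - S))).trace = ((B - S) * B⁻¹ * (B - S)).trace := by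
    rw [trace_mul_comm, Matrix.mul_assoc, trace_mul_comm, Matrix.mul_assoc]
  rw [jeffreysDiv_eq_half_trace hS hB]
  have := hB.posSemidef.trace_nonneg
  nlinarith

theorem sq_sub_apply_le_jeffreysDiv (hS : S.PosDef) (hB : B.PosDef) (i j : n) :
    (S i j - B i j) ^ 2 ≤
      4 * B.trace ^ 2 * (jeffreysDiv S B + Fintype.card n) * jeffreysDiv S B := by
  have hD : (B - S)ᵀ = B - S := by
    rw [← conjTranspose_eq_transpose_of_trivial]
    exact (hB.isHermitian.sub hS.isHermitian).eq
  have htr := trace_le_jeffreysDiv hS hB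
  have hJ := jeffreysDiv_nonneg hS hB
  have hB₀ := hB.posSemidef.trace_nonneg
  calc (S i j - B i j) ^ 2 = (B - S) i j ^ 2 := by rw [Matrix.sub_apply]; ring
    _ ≤ ((B - S) * (B - S)).trace := by
      simpa only [hD] using sq_apply_le_trace_transpose_mul_self (B - S) i j
    _ ≤ 2 * B.trace * S.trace * jeffreysDiv S B := trace_sub_mul_sub_le_jeffreysDiv hS hB
    _ ≤ 4 * B.trace ^ 2 * (jeffreysDiv S B + Fintype.card n) * jeffreysDiv S B := by
      have := mul_le_mul_of_nonneg_left htr (mul_nonneg (mul_nonneg zero_le_two hB₀) hJ)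
      nlinarith

theorem tendsto_of_jeffreysDiv_tendsto_zero {ι : Type*} {l : Filter ι} {S : ι → Matrix n n ℝ}
    (hS : ∀ k, (S k).PosDef) (hB : B.PosDef)
    (h : Tendsto (fun k => jeffreysDiv (S k) B) l (𝓝 0)) : Tendsto S l (𝓝 B) := by
  set g : ℝ → ℝ := fun m => 4 * B.trace ^ 2 * (m + Fintype.card n) * m
  have hg : Tendsto (fun k => √(g (jeffreysDiv (S k) B))) l (𝓝 0) := by
    have : Continuous fun m => √(g m) := by fun_prop
    simpa [g, Function.comp_def] using (this.tendsto 0).comp h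
  refine tendsto_pi_nhds.2 fun i => tendsto_pi_nhds.2 fun j => ?_
  exact tendsto_iff_norm_sub_tendsto_zero.2 <| squeeze_zero (fun _ => norm_nonneg _)
    (fun k => Real.abs_le_sqrt (sq_sub_apply_le_jeffreysDiv (hS k) hB i j)) hg

end Jeffreys

theorem isAligned_one {d : ℕ} (A : Matrix (Fin d) (Fin d) ℝ) : IsAligned 1 A :=
  fun _ => ⟨1, fun x _ => by simp [eigSp]⟩

theorem misalignment_eq_sInf_image {d : ℕ} (A B : Matrix (Fin d) (Fin d) ℝ) :
    misalignment A B = sInf ((jeffreysDiv · B) '' {S | S.PosDef ∧ IsAligned S A}) := by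
  simp only [misalignment, jeffreysDiv, Fintype.card_fin]
  congr 1
  ext m
  simp [eq_comm, and_assoc]

theorem misalignment_eq_zero_iff {d : ℕ} (A B : Matrix (Fin d) (Fin d) ℝ)
    (hB : B.PosDef) :
    misalignment A B = 0 ↔ IsAligned B A := by
  rw [misalignment_eq_sInf_image]
  set T := (jeffreysDiv · B) '' {S | S.PosDef ∧ IsAligned S A}
  have hlb : ∀ m ∈ T, 0 ≤ m := by
    rintro _ ⟨S, ⟨hS, -⟩, rfl⟩
    exact jeffreysDiv_nonneg hS hB
  constructor
  · intro h μ
    obtain ⟨u, -, hu, hmem⟩ := exists_seq_tendsto_sInf (S := T)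
      ⟨_, 1, ⟨PosDef.one, isAligned_one A⟩, rfl⟩ ⟨0, hlb⟩
    choose S hS hSu using hmem
    have hlim : Tendsto S atTop (𝓝 B) :=
      tendsto_of_jeffreysDiv_tendsto_zero (fun k => (hS k).1) hB (by simpa [hSu, h] using hu)
    exact (Submodule.closed_of_finiteDimensional (scalarOn (eigSp A μ))).mem_of_tendsto hlim
      (Eventually.of_forall fun k => (hS k).2 μ)
  · intro hBA
    exact (IsLeast.csInf_eq ⟨⟨B, ⟨hB, hBA⟩, jeffreysDiv_self hB⟩, hlb⟩)
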